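/- arXiv:1407.3857 — 5 statements merged into one kernel-verified Lean document; each statement's English description precedes it below -/
import Mathlib

section
/- Let T be a finite rooted tree with node set N, let w : N → ℝ be a nonnegative weight function, let T* > 0 be a real number such that w(ℓ) ≤ T* for every leaf ℓ, and let α > 1 and β ≥ 0 be real constants. Suppose that every internal node X satisfies the Push Out condition: ∑_{Y ∈ C(X)} w(Y) ≥ α·w(X) − β·(|C(X)|+1)·T*. Then the total weight satisfies ∑_{X ∈ N} w(X) ≤ ((2β+α)/(α−1))·|N|·T*. -/
/-- A finite rooted tree on node set `N`: a distinguished root and a parent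
function such that the root is its own parent and iterating the parent
function from any node eventually reaches the root. -/
structure FinRootedTree (N : Type*) where
  root : N
  parent : N → N
  parent_root : parent root = root
  reaches_root : ∀ X : N, ∃ k : ℕ, parent^[k] X = root

/-- The children of a node `X`: the non-root nodes whose parent is `X`. -/
def FinRootedTree.children {N : Type*} [Fintype N] [DecidableEq N]
    (T : FinRootedTree N) (X : N) : Finset N :=
  Finset.univ.filter fun Y => Y ≠ T.root ∧ T.parent Y = X

/-- Push Out Amortization (Theorem 1): if every internal node satisfies the
Push Out condition, the total weight is at most `((2β+α)/(α−1))·|N|·T*`. -/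
theorem pushOutAmortization {N : Type*} [Fintype N] [DecidableEq N]
    (T : FinRootedTree N) (w : N → ℝ) (Tstar α β : ℝ)
    (hw : ∀ X : N, 0 ≤ w X) (hTstar : 0 < Tstar)
    (hleaf : ∀ X : N, T.children X = ∅ → w X ≤ Tstar)
    (hα : 1 < α) (hβ : 0 ≤ β)
    (hPO : ∀ X : N, T.children X ≠ ∅ →
      α * w X - β * (((T.children X).card : ℝ) + 1) * Tstar ≤
        ∑ Y ∈ T.children X, w Y) :
    ∑ X : N, w X ≤ ((2 * β + α) / (α - 1)) * (Fintype.card N : ℝ) * Tstar := by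
  classical
  set s : Finset N := Finset.univ.filter (fun Y => Y ≠ T.root) with hs
  have hfib : ∀ (f : N → ℝ),
      ∑ X : N, ∑ Y ∈ T.children X, f Y = ∑ Y ∈ s, f Y := by
    intro f
    rw [← Finset.sum_fiberwise_of_maps_to (g := T.parent)
        (fun Y _ => Finset.mem_univ (T.parent Y)) f]
    apply Finset.sum_congr rfl
    intro X _
    congr 1
    ext Y
    simp [FinRootedTree.children, hs, Finset.mem_filter]
  -- sum of children weights
  have h1 : ∑ X : N, ∑ Y ∈ T.children X, w Y ≤ ∑ X : N, w X := by
    rw [hfib w]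
    exact Finset.sum_le_sum_of_subset_of_nonneg (Finset.filter_subset _ _)
      (fun i _ _ => hw i)
  -- sum of children cards
  have h2 : ∑ X : N, ((T.children X).card : ℝ) ≤ (Fintype.card N : ℝ) := by
    have := hfib (fun _ => (1 : ℝ))
    simp only [Finset.sum_const, nsmul_eq_mul, mul_one] at this
    rw [this]
    exact_mod_cast Finset.card_le_univ s
  -- per node bound
  have hnode : ∀ X : N, α * w X ≤ (∑ Y ∈ T.children X, w Y)
      + β * (((T.children X).card : ℝ) + 1) * Tstar + α * Tstar := by
    intro X
    by_cases h : T.children X = ∅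
    · have hw' := hleaf X h
      have h0 : (∑ Y ∈ T.children X, w Y) = 0 := by simp [h]
      have hcard : ((T.children X).card : ℝ) = 0 := by simp [h]
      rw [h0, hcard]
      nlinarith [hw X]
    · have := hPO X h
      nlinarith
  have hsum : α * (∑ X : N, w X) ≤ (∑ X : N, w X)
      + (2 * β + α) * (Fintype.card N : ℝ) * Tstar := by
    have := Finset.sum_le_sum (s := Finset.univ) (fun X _ => hnode X)
    rw [← Finset.mul_sum] at this
    have hwnn : (0:ℝ) ≤ ∑ X : N, w X := Finset.sum_nonneg fun i _ => hw i
    have hcardsum : ∑ X : N, (β * (((T.children X).card : ℝ) + 1) * Tstar)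
        ≤ 2 * β * (Fintype.card N : ℝ) * Tstar := by
      have heq : ∑ X : N, (β * (((T.children X).card : ℝ) + 1) * Tstar)
          = β * Tstar * ((∑ X : N, ((T.children X).card : ℝ)) + (Fintype.card N : ℝ)) := by
        calc ∑ X : N, (β * (((T.children X).card : ℝ) + 1) * Tstar)
            = ∑ X : N, (β * Tstar * ((T.children X).card : ℝ) + β * Tstar) :=
              Finset.sum_congr rfl fun X _ => by ring
          _ = β * Tstar * (∑ X : N, ((T.children X).card : ℝ))
                + (Fintype.card N : ℝ) * (β * Tstar) := by
              rw [Finset.sum_add_distrib, ← Finset.mul_sum, Finset.sum_const,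
                Finset.card_univ, nsmul_eq_mul]
          _ = β * Tstar * ((∑ X : N, ((T.children X).card : ℝ)) + (Fintype.card N : ℝ)) := by
              ring
      rw [heq]
      nlinarith [h2, mul_nonneg hβ hTstar.le, Finset.sum_nonneg (fun (X : N) (_ : X ∈ Finset.univ) =>
        (Nat.cast_nonneg (T.children X).card : (0:ℝ) ≤ _))]
    have hconst : ∑ X : N, α * Tstar = α * (Fintype.card N : ℝ) * Tstar := by
      simp [Finset.sum_const, Finset.card_univ, mul_assoc, mul_comm]
    rw [Finset.sum_add_distrib, Finset.sum_add_distrib, hconst] at this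
    nlinarith [h1, hcardsum]
  rw [div_mul_eq_mul_div, div_mul_eq_mul_div, le_div_iff₀ (by linarith : (0:ℝ) < α - 1)]
  nlinarith [hsum]
end

section
/- Let T be a finite rooted tree with node set N, let w : N → ℝ be a strictly positive weight function, let T* ≥ 0, α > 1, β ≥ 0 be real constants, and suppose every internal node X satisfies ∑_{Y ∈ C(X)} w(Y) ≥ α·w(X) − β·(|C(X)|+1)·T*. Define S : N → ℝ recursively by S(root) = 0 and, for each child Z of a node X, S(Z) = (S(X) + w(X) − (β/(α−1))·(|C(X)|+1)·T*) · w(Z) / (∑_{Y ∈ C(X)} w(Y)). Then S(X) ≤ w(X)/(α−1) holds for every node X. -/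
/-!
Induction from the root down. If the parent `P` of `Z` satisfies `S P ≤ w P / (α - 1)`, the
Push Out condition at `P` bounds the total amount `S P + w P - β/(α-1)·(|C(P)|+1)·T*` that `P`
distributes by `(∑_{Y ∈ C(P)} w Y) / (α - 1)`; `Z` receives the fraction `w Z / ∑_{Y ∈ C(P)} w Y`
of it, hence at most `w Z / (α - 1)`.
-/

namespace FinRootedTree

variable {N : Type*}

theorem induction_from_root (T : FinRootedTree N) {p : N → Prop} (root : p T.root)
    (step : ∀ X, X ≠ T.root → p (T.parent X) → p X) (X : N) : p X := by
  obtain ⟨k, hk⟩ := T.reaches_root X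
  induction k generalizing X with
  | zero => simpa [← hk] using root
  | succ k ih =>
    by_cases hX : X = T.root
    · exact hX ▸ root
    · exact step X hX (ih _ (by rwa [Function.iterate_succ_apply] at hk))

theorem mem_children_parent [Fintype N] [DecidableEq N] (T : FinRootedTree N) {X : N}
    (hX : X ≠ T.root) : X ∈ T.children (T.parent X) := by
  simp [children, hX]

end FinRootedTree

theorem pushOut_amount_le {α β c t s v σ : ℝ} (hα : 1 < α) (hs : s ≤ v / (α - 1))
    (hσ : α * v - β * c * t ≤ σ) : s + v - β / (α - 1) * c * t ≤ σ / (α - 1) := by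
  have ha : 0 < α - 1 := sub_pos.mpr hα
  rw [le_div_iff₀ ha] at hs ⊢
  calc (s + v - β / (α - 1) * c * t) * (α - 1) = s * (α - 1) + (α - 1) * v - β * c * t := by
        field_simp
    _ ≤ σ := by linarith

theorem proportional_share_le {A x σ a : ℝ} (hA : A ≤ σ / a) (hx : 0 ≤ x) (hσ : 0 < σ) :
    A * x / σ ≤ x / a :=
  calc A * x / σ ≤ σ / a * x / σ := by gcongr
    _ = x / a := by field_simp

theorem pushOutRule_claim_general {N : Type*} [Fintype N] [DecidableEq N]
    (T : FinRootedTree N) (w : N → ℝ) (Tstar α β : ℝ)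
    (hw : ∀ X : N, 0 < w X)
    (hα : 1 < α)
    (hPO : ∀ X : N, T.children X ≠ ∅ →
      α * w X - β * (((T.children X).card : ℝ) + 1) * Tstar ≤
        ∑ Y ∈ T.children X, w Y)
    (S : N → ℝ)
    (hSroot : S T.root = 0)
    (hSrec : ∀ Z : N, Z ≠ T.root →
      S Z = (S (T.parent Z) + w (T.parent Z) -
              (β / (α - 1)) * (((T.children (T.parent Z)).card : ℝ) + 1) * Tstar) *
            w Z / (∑ Y ∈ T.children (T.parent Z), w Y)) :
    ∀ X : N, S X ≤ w X / (α - 1) := by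
  refine T.induction_from_root ?_ fun Z hZ hparent => ?_
  · rw [hSroot]
    exact div_nonneg (hw _).le (sub_pos.mpr hα).le
  · have hmem := T.mem_children_parent hZ
    rw [hSrec Z hZ]
    exact proportional_share_le
      (pushOut_amount_le hα hparent (hPO _ (Finset.ne_empty_of_mem hmem))) (hw Z).le
      (Finset.sum_pos (fun Y _ => hw Y) ⟨Z, hmem⟩)

/-- The Claim in the proof of Theorem 1: if `S` is defined by the Push Out
rule (`S(root) = 0`, and each child receives computation time proportional to
its own weight), then `S(X) ≤ w(X)/(α−1)` for every node `X`. -/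
theorem pushOutRule_claim {N : Type*} [Fintype N] [DecidableEq N]
    (T : FinRootedTree N) (w : N → ℝ) (Tstar α β : ℝ)
    (hw : ∀ X : N, 0 < w X) (hTstar : 0 ≤ Tstar)
    (hα : 1 < α) (hβ : 0 ≤ β)
    (hPO : ∀ X : N, T.children X ≠ ∅ →
      α * w X - β * (((T.children X).card : ℝ) + 1) * Tstar ≤
        ∑ Y ∈ T.children X, w Y)
    (S : N → ℝ)
    (hSroot : S T.root = 0)
    (hSrec : ∀ Z : N, Z ≠ T.root →
      S Z = (S (T.parent Z) + w (T.parent Z) -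
              (β / (α - 1)) * (((T.children (T.parent Z)).card : ℝ) + 1) * Tstar) *
            w Z / (∑ Y ∈ T.children (T.parent Z), w Y)) :
    ∀ X : N, S X ≤ w X / (α - 1) :=
  pushOutRule_claim_general T w Tstar α β hw hα hPO S hSroot hSrec
end

section
/- Let T be a finite rooted tree with node set N, let w : N → ℝ be a nonnegative weight function, and let α > 1 be a real constant. Suppose that every internal node X satisfies ∑_{Y ∈ C(X)} w(Y) ≥ α·w(X). Then ∑_{X ∈ N} w(X) ≤ (α/(α−1)) · ∑_{ℓ leaf of T} w(ℓ). -/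
/-- The case `β = 0` of the Push Out condition: if every internal node's
children carry total weight at least `α` times its own weight, then the total
weight is at most `α/(α−1)` times the total weight of the leaves. -/
theorem pushOut_beta_zero {N : Type*} [Fintype N] [DecidableEq N]
    (T : FinRootedTree N) (w : N → ℝ) (α : ℝ)
    (hw : ∀ X : N, 0 ≤ w X) (hα : 1 < α)
    (hPO : ∀ X : N, T.children X ≠ ∅ → α * w X ≤ ∑ Y ∈ T.children X, w Y) :
    ∑ X : N, w X ≤
      (α / (α - 1)) * ∑ X ∈ Finset.univ.filter (fun X => T.children X = ∅), w X := by
  classical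
  set Int : Finset N := Finset.univ.filter (fun X => T.children X ≠ ∅) with hInt
  set L : ℝ := ∑ X ∈ Finset.univ.filter (fun X => T.children X = ∅), w X with hL
  set I : ℝ := ∑ X ∈ Int, w X with hI
  have hdisj : ∀ x ∈ Int, ∀ y ∈ Int, x ≠ y → Disjoint (T.children x) (T.children y) := by
    intro x _ y _ hxy
    refine Finset.disjoint_left.2 ?_
    intro a ha hb
    simp only [FinRootedTree.children, Finset.mem_filter] at ha hb
    exact hxy (ha.2.2 ▸ hb.2.2.symm ▸ rfl)
  have h1 : ∑ X ∈ Int, ∑ Y ∈ T.children X, w Y = ∑ Y ∈ Int.biUnion T.children, w Y :=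
    (Finset.sum_biUnion hdisj).symm
  have h2 : ∑ Y ∈ Int.biUnion T.children, w Y ≤ ∑ Y : N, w Y :=
    Finset.sum_le_sum_of_subset_of_nonneg (Finset.subset_univ _) (fun i _ _ => hw i)
  have h3 : α * I ≤ ∑ X ∈ Int, ∑ Y ∈ T.children X, w Y := by
    rw [hI, Finset.mul_sum]
    refine Finset.sum_le_sum ?_
    intro X hX
    exact hPO X (Finset.mem_filter.1 hX).2
  have hsplit : ∑ X : N, w X = L + I := by
    rw [hL, hI, hInt]
    exact (Finset.sum_filter_add_sum_filter_not _ _ _).symm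
  have hLnn : 0 ≤ L := Finset.sum_nonneg fun i _ => hw i
  have hInn : 0 ≤ I := Finset.sum_nonneg fun i _ => hw i
  have key : α * I ≤ L + I := by
    calc α * I ≤ _ := h3
    _ = _ := h1
    _ ≤ ∑ Y : N, w Y := h2
    _ = L + I := hsplit
  rw [hsplit, div_mul_eq_mul_div, le_div_iff₀ (by linarith)]
  nlinarith
end

section
/- Every finite chordal simple graph with at least two vertices has at least two simplicial vertices. -/
/-!
Take non-adjacent vertices `a ≠ b` of a vertex set `s`, let `B` be the component of `b` once the
closed neighbourhood of `a` is deleted from `s`, and `S` the vertices of `s` outside `B` with a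
neighbour in `B`. Every vertex of `S` is adjacent to `a`, so two non-adjacent vertices of `S`,
joined by a chordless path through `B` and closed up through `a`, would form a chordless cycle of
length at least four: `S` is a clique. By induction on `B ∪ S`, which misses `a`, some vertex
`u` of `B` is simplicial in `B ∪ S`, i.e. `G.IsClique ((B ∪ S) ∩ G.neighborSet u)` (if
`B ∪ S` is a clique, `b` is; otherwise of two non-adjacent simplicial vertices one is outside the
clique `S`), hence simplicial in `s`, since all its neighbours in `s` lie in `B ∪ S`. Applied
twice, this yields two non-adjacent simplicial vertices in every non-clique.
-/

/-- A simple graph is chordal if every cycle of length at least four has a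
chord: an edge of the graph joining two vertices of the cycle that are not
consecutive on the cycle (i.e. the edge is not an edge of the cycle). -/
def SimpleGraph.IsChordal {V : Type*} (G : SimpleGraph V) : Prop :=
  ∀ (v : V) (c : G.Walk v v), c.IsCycle → 4 ≤ c.length →
    ∃ x y : V, x ∈ c.support ∧ y ∈ c.support ∧ G.Adj x y ∧ s(x, y) ∉ c.edges

/-- A vertex is simplicial if its neighborhood is a clique. -/
def SimpleGraph.IsSimplicial {V : Type*} (G : SimpleGraph V) (v : V) : Prop :=
  ∀ x y : V, G.Adj v x → G.Adj v y → x ≠ y → G.Adj x y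

namespace SimpleGraph

variable {V : Type*} {G : SimpleGraph V}

lemma isSimplicial_iff_isClique_neighborSet {v : V} :
    G.IsSimplicial v ↔ G.IsClique (G.neighborSet v) :=
  ⟨fun h _ hx _ hy hxy => h _ _ hx hy hxy, fun h _ _ hx hy hxy => h hx hy hxy⟩

lemma spanningCoe_induce_adj {s : Set V} {u v : V} :
    (G.induce s).spanningCoe.Adj u v ↔ G.Adj u v ∧ u ∈ s ∧ v ∈ s := by
  simp

lemma spanningCoe_induce_mono {s t : Set V} (h : s ⊆ t) :
    (G.induce s).spanningCoe ≤ (G.induce t).spanningCoe := fun _ _ huv => by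
  rw [spanningCoe_induce_adj] at huv ⊢
  exact ⟨huv.1, h huv.2.1, h huv.2.2⟩

namespace Walk

lemma mem_edges_of_length_eq_one {u v : V} {p : G.Walk u v} (h : p.length = 1) :
    s(u, v) ∈ p.edges := by
  cases p with
  | nil => simp at h
  | cons _ q => cases q with
    | nil => simp
    | cons _ _ => simp at h

lemma exists_isSubwalk_of_mem_support {u v x y : V} {p : G.Walk u v} (hx : x ∈ p.support)
    (hy : y ∈ p.support) :
    (∃ q : G.Walk x y, q.IsSubwalk p) ∨ ∃ q : G.Walk y x, q.IsSubwalk p := by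
  classical
  rw [← p.take_spec hx, mem_support_append_iff] at hy
  rcases hy with hy | hy
  · exact .inr ⟨_,
      ((p.takeUntil x hx).isSubwalk_dropUntil hy).trans (p.isSubwalk_takeUntil hx)⟩
  · exact .inl ⟨_,
      ((p.dropUntil x hx).isSubwalk_takeUntil hy).trans (p.isSubwalk_dropUntil hx)⟩

lemma isChordless_of_length_eq_dist {u v : V} {p : G.Walk u v} (hp : p.length = G.dist u v) :
    p.IsChordless := by
  have key : ∀ ⦃x y : V⦄ (q : G.Walk x y), q.IsSubwalk p → G.Adj x y →
      s(x, y) ∈ p.edges :=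
    fun x y q hq hxy => hq.edges_subset <| mem_edges_of_length_eq_one <|
      (length_eq_dist_of_subwalk hp hq).trans (dist_eq_one_iff_adj.mpr hxy)
  rw [isChordless_iff_forall_mem_edges]
  intro x y hx hy hxy
  rcases exists_isSubwalk_of_mem_support hx hy with ⟨q, hq⟩ | ⟨q, hq⟩
  · exact key q hq hxy
  · exact Sym2.eq_swap ▸ key q hq hxy.symm

lemma support_subset_of_spanningCoe_induce {s : Set V} {u v : V}
    (p : (G.induce s).spanningCoe.Walk u v) (hu : u ∈ s) : ∀ w ∈ p.support, w ∈ s := by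
  induction p with
  | nil => simpa
  | cons h q ih =>
    rw [spanningCoe_induce_adj] at h
    simpa [hu] using ih h.2.2

end Walk

lemma Reachable.exists_isPath_isChordless {u v : V} (h : G.Reachable u v) :
    ∃ p : G.Walk u v, p.IsPath ∧ p.IsChordless := by
  obtain ⟨p, hp, hlen⟩ := h.exists_path_of_dist
  exact ⟨p, hp, Walk.isChordless_of_length_eq_dist hlen⟩

lemma Reachable.mem_of_spanningCoe_induce {s : Set V} {u v : V}
    (h : (G.induce s).spanningCoe.Reachable u v) (hu : u ∈ s) : v ∈ s :=
  h.elim fun p => p.support_subset_of_spanningCoe_induce hu v p.end_mem_support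

/-- The path closed up through `a` is a cycle of length at least four without chords. -/
lemma IsChordal.adj_of_isChordless (hG : G.IsChordal) {a x y : V} (hax : G.Adj a x)
    (hay : G.Adj a y) (hxy : x ≠ y) {p : G.Walk x y} (hp : p.IsPath) (hpc : p.IsChordless)
    (ha : a ∉ p.support) (hN : ∀ v ∈ p.support, G.Adj a v → v = x ∨ v = y) :
    G.Adj x y := by
  by_contra hnxy
  have hlen : 2 ≤ p.length := by
    by_contra! h
    interval_cases hl : p.length
    · exact hxy (Walk.eq_of_length_eq_zero hl)
    · exact hnxy (Walk.adj_of_length_eq_one hl)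
  set c := Walk.cons hax (p.concat hay.symm)
  have hc : c.IsCycle := by
    refine (Walk.cons_isCycle_iff _ _).mpr ⟨hp.concat ha _, ?_⟩
    simp only [Walk.edges_concat, List.concat_eq_append, List.mem_append, List.mem_singleton,
      not_or]
    exact ⟨fun h => ha (p.fst_mem_support_of_mem_edges h), by grind [Adj.ne]⟩
  obtain ⟨m, n, hm, hn, hmn, hchord⟩ := hG a c hc (by simp [c]; omega)
  have hsupp : ∀ v ∈ c.support, v = a ∨ v ∈ p.support := by simp [c, or_comm]
  have hedges : ∀ v ∈ p.support, G.Adj a v → s(a, v) ∈ c.edges := fun v hv hav => by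
    rcases hN v hv hav with rfl | rfl <;> simp [c, Sym2.eq_swap]
  rcases hsupp m hm with rfl | hmp <;> rcases hsupp n hn with rfl | hnp
  · exact hmn.ne rfl
  · exact hchord (hedges n hnp hmn)
  · exact hchord (Sym2.eq_swap ▸ hedges m hmp hmn.symm)
  · exact hchord (by simp [c, hpc.mem_edges hmp hnp hmn])

lemma IsChordal.adj_of_reachable (hG : G.IsChordal) {a x y : V} (hax : G.Adj a x)
    (hay : G.Adj a y) (hxy : x ≠ y)
    (h : (G.induce ({x, y} ∪ (insert a (G.neighborSet a))ᶜ)).spanningCoe.Reachable x y) :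
    G.Adj x y := by
  set T : Set V := {x, y} ∪ (insert a (G.neighborSet a))ᶜ
  obtain ⟨q, hq, hqc⟩ := h.exists_isPath_isChordless
  have hqT := q.support_subset_of_spanningCoe_induce (by simp [T] : x ∈ T)
  refine hG.adj_of_isChordless hax hay hxy (hq.mapLe (spanningCoe_induce_le G T)) ?_ ?_ ?_ <;>
    simp only [Walk.isChordless_iff_forall_mem_edges, Walk.support_mapLe_eq_support,
      Walk.edges_mapLe_eq_edges]
  · exact fun u v hu hv huv =>
      hqc.mem_edges hu hv (spanningCoe_induce_adj.mpr ⟨huv, hqT u hu, hqT v hv⟩)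
  · intro ha
    simpa [T, hax.ne, hay.ne] using hqT a ha
  · intro v hv hav
    simpa [T, hav] using hqT v hv

lemma IsChordal.isClique_of_exists_adj_reachable (hG : G.IsChordal) {a b : V} {T : Set V}
    (hT : T ⊆ (insert a (G.neighborSet a))ᶜ) (hb : b ∈ T) {X : Set V}
    (haX : ∀ x ∈ X, G.Adj a x)
    (hX : ∀ x ∈ X, ∃ z, (G.induce T).spanningCoe.Reachable b z ∧ G.Adj z x) :
    G.IsClique X := by
  intro x hx y hy hxy
  obtain ⟨zx, hzx, hzxx⟩ := hX x hx
  obtain ⟨zy, hzy, hzyy⟩ := hX y hy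
  have hTle : (G.induce T).spanningCoe ≤
      (G.induce ({x, y} ∪ (insert a (G.neighborSet a))ᶜ)).spanningCoe :=
    spanningCoe_induce_mono (hT.trans Set.subset_union_right)
  refine hG.adj_of_reachable (haX x hx) (haX y hy) hxy <|
    ((Adj.reachable ?_).trans ((hzx.symm.trans hzy).mono hTle)).trans (Adj.reachable ?_)
  · exact spanningCoe_induce_adj.mpr
      ⟨hzxx.symm, by simp, .inr (hT (hzx.mem_of_spanningCoe_induce hb))⟩
  · exact spanningCoe_induce_adj.mpr
      ⟨hzyy, .inr (hT (hzy.mem_of_spanningCoe_induce hb)), by simp⟩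

lemma exists_pair_isClique_inter_neighborSet {s : Set V}
    (h : ∀ a ∈ s, ∀ b ∈ s, b ≠ a → ¬G.Adj a b →
      ∃ u ∈ s, u ≠ a ∧ ¬G.Adj a u ∧ G.IsClique (s ∩ G.neighborSet u))
    (hs : ¬G.IsClique s) :
    ∃ u ∈ s, ∃ v ∈ s, u ≠ v ∧ ¬G.Adj u v ∧
      G.IsClique (s ∩ G.neighborSet u) ∧ G.IsClique (s ∩ G.neighborSet v) := by
  obtain ⟨a, ha, b, hb, hab, hnab⟩ : ∃ a ∈ s, ∃ b ∈ s, a ≠ b ∧ ¬G.Adj a b := by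
    simpa [IsClique, Set.Pairwise] using hs
  obtain ⟨u, hu, hua, hau, hu'⟩ := h a ha b hb hab.symm hnab
  obtain ⟨v, hv, hvu, huv, hv'⟩ := h u hu a ha hua.symm (fun h => hau h.symm)
  exact ⟨u, hu, v, hv, hvu.symm, huv, hu', hv'⟩

theorem IsChordal.exists_isClique_inter_neighborSet [Finite V] (hG : G.IsChordal) (s : Set V) :
    ∀ a ∈ s, ∀ b ∈ s, b ≠ a → ¬G.Adj a b →
      ∃ u ∈ s, u ≠ a ∧ ¬G.Adj a u ∧ G.IsClique (s ∩ G.neighborSet u) := by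
  induction s using WellFoundedLT.induction with
  | _ s ih =>
  intro a ha b hb hba hab
  set T : Set V := s ∩ (insert a (G.neighborSet a))ᶜ
  set B : Set V := {z | (G.induce T).spanningCoe.Reachable b z}
  set S : Set V := {x | x ∈ s ∧ x ∉ B ∧ ∃ z ∈ B, G.Adj z x}
  have hbT : b ∈ T := by simp [T, hb, hba, hab]
  have hBT : B ⊆ T := fun z hz => hz.mem_of_spanningCoe_induce hbT
  have hclosed : ∀ z ∈ B, s ∩ G.neighborSet z ⊆ B ∪ S := fun z hz w ⟨hw, hzw⟩ =>
    (em (w ∈ B)).imp id fun hwB => ⟨hw, hwB, z, hz, hzw⟩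
  have hSa : ∀ x ∈ S, G.Adj a x := by
    rintro x ⟨hx, hxB, z, hz, hzx⟩
    obtain ⟨-, hza⟩ : z ∈ s ∧ z ∉ insert a (G.neighborSet a) := hBT hz
    by_contra hax
    have hxT : x ∈ T := ⟨hx, by rintro (rfl | h) <;> simp_all [adj_comm]⟩
    exact hxB (hz.trans (spanningCoe_induce_adj.mpr ⟨hzx, hBT hz, hxT⟩).reachable)
  have hS : G.IsClique S := hG.isClique_of_exists_adj_reachable Set.inter_subset_right hbT hSa
    fun x ⟨_, _, z, hz, hzx⟩ => ⟨z, hz, hzx⟩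
  have hsub : B ∪ S ⊂ s := by
    refine (Set.ssubset_iff_of_subset ?_).mpr ⟨a, ha, ?_⟩
    · exact Set.union_subset (fun z hz => (hBT hz).1) fun x hx => hx.1
    · rintro (haB | haS)
      · exact (hBT haB).2 (Set.mem_insert a _)
      · exact (hSa a haS).ne rfl
  have hB : ∀ w ∈ B, G.IsClique ((B ∪ S) ∩ G.neighborSet w) →
      ∃ u ∈ s, u ≠ a ∧ ¬G.Adj a u ∧ G.IsClique (s ∩ G.neighborSet u) := by
    intro w hw hcl
    obtain ⟨hws, hwa⟩ : w ∈ s ∧ w ∉ insert a (G.neighborSet a) := hBT hw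
    simp only [Set.mem_insert_iff, mem_neighborSet, not_or] at hwa
    exact ⟨w, hws, hwa.1, hwa.2,
      hcl.subset (Set.subset_inter (hclosed w hw) Set.inter_subset_right)⟩
  by_cases hcl : G.IsClique (B ∪ S)
  · exact hB b (Reachable.refl _) (hcl.subset Set.inter_subset_left)
  obtain ⟨u, hu, v, hv, huv, hnuv, hu', hv'⟩ :=
    exists_pair_isClique_inter_neighborSet (ih _ hsub) hcl
  rcases hu with hu | hu
  · exact hB u hu hu'
  rcases hv with hv | hv
  · exact hB v hv hv'
  exact absurd (hS hu hv huv) hnuv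

end SimpleGraph

/-- Every finite chordal simple graph with at least two vertices has at least
two simplicial vertices. -/
theorem chordal_two_simplicial {V : Type*} [Fintype V]
    (G : SimpleGraph V) (hG : G.IsChordal) (hV : 2 ≤ Fintype.card V) :
    ∃ u v : V, u ≠ v ∧ G.IsSimplicial u ∧ G.IsSimplicial v := by
  simp only [SimpleGraph.isSimplicial_iff_isClique_neighborSet]
  by_cases hcl : G.IsClique (Set.univ : Set V)
  · obtain ⟨u, v, huv⟩ := Fintype.exists_pair_of_one_lt_card hV
    exact ⟨u, v, huv, hcl.subset (Set.subset_univ _), hcl.subset (Set.subset_univ _)⟩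
  obtain ⟨u, -, v, -, huv, -, hu, hv⟩ := SimpleGraph.exists_pair_isClique_inter_neighborSet
    (hG.exists_isClique_inter_neighborSet Set.univ) hcl
  rw [Set.univ_inter] at hu hv
  exact ⟨u, v, huv, hu, hv⟩
end

section
/- Let G be a finite connected simple graph on n ≥ 1 vertices. Then there are at least 2^(n−1) orderings (v_1, …, v_n) of all the vertices of G such that for every i with 1 ≤ i ≤ n, the subgraph of G induced by {v_i, v_{i+1}, …, v_n} is connected. -/
/-!
Prepending a non-cut vertex `v` to an elimination ordering of `G - v` gives an elimination
ordering of `G`. A finite connected graph on at least two vertices has two distinct non-cut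
vertices, and orderings starting at different vertices differ, so the number of elimination
orderings at least doubles with each added vertex.
-/

open SimpleGraph

/-- `σ` is an elimination ordering of non-cut vertices of `G`: for every `i`,
the subgraph induced by the not-yet-removed vertices `{σ j | j ≥ i}` is
connected. -/
def IsConnectedEliminationOrdering {V : Type*} {n : ℕ} (G : SimpleGraph V)
    (σ : Fin n ≃ V) : Prop :=
  ∀ i : Fin n, (G.induce {x : V | ∃ j : Fin n, i ≤ j ∧ σ j = x}).Connected

namespace SimpleGraph

variable {V : Type*} {G : SimpleGraph V}

/-- The two non-cut vertices are two leaves of a spanning tree. -/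
theorem Connected.exists_ne_connected_induce_compl_singleton [Finite V] [Nontrivial V]
    (hG : G.Connected) :
    ∃ u v : V, u ≠ v ∧ (G.induce {u}ᶜ).Connected ∧ (G.induce {v}ᶜ).Connected := by
  obtain ⟨T, hTG, hT⟩ := hG.exists_isTree_le
  have := Fintype.ofFinite V
  classical
  have of_leaf {w : V} (hw : T.degree w = 1) : (G.induce {w}ᶜ).Connected :=
    (hT.connected.induce_compl_singleton_of_degree_eq_one hw).mono fun _ _ h ↦ hTG h
  obtain ⟨u, v, huv, hu, hv⟩ := hT.exists_ne_and_degree_eq_one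
  exact ⟨u, v, huv, of_leaf hu, of_leaf hv⟩

noncomputable def induceInduceIso (G : SimpleGraph V) (s : Set V) (t : Set s) :
    (G.induce s).induce t ≃g G.induce (Subtype.val '' t) where
  toEquiv := Equiv.Set.image Subtype.val t Subtype.val_injective
  map_rel_iff' := Iff.rfl

end SimpleGraph

section ConsEquiv

variable {V : Type*}

lemma Equiv.setOf_zero_le_eq_univ {n : ℕ} (σ : Fin (n + 1) ≃ V) :
    {x : V | ∃ j : Fin (n + 1), 0 ≤ j ∧ σ j = x} = .univ :=
  Set.eq_univ_of_forall fun x ↦ ⟨σ.symm x, Fin.zero_le _, σ.apply_symm_apply x⟩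

variable [DecidableEq V] {m : ℕ}

def Equiv.finConsOfCompl (v : V) (σ : Fin m ≃ ({v}ᶜ : Set V)) : Fin (m + 1) ≃ V :=
  (finSuccEquiv m).trans (σ.optionCongr.trans (Equiv.optionSubtypeNe v))

@[simp] lemma Equiv.finConsOfCompl_zero (v : V) (σ : Fin m ≃ ({v}ᶜ : Set V)) :
    Equiv.finConsOfCompl v σ 0 = v :=
  rfl

@[simp] lemma Equiv.finConsOfCompl_succ (v : V) (σ : Fin m ≃ ({v}ᶜ : Set V)) (i : Fin m) :
    Equiv.finConsOfCompl v σ i.succ = σ i :=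
  rfl

lemma Equiv.finConsOfCompl_injective (v : V) :
    Function.Injective (Equiv.finConsOfCompl (m := m) v) := fun σ τ h ↦
  Equiv.ext fun i ↦ Subtype.val_injective <| by
    rw [← Equiv.finConsOfCompl_succ v σ, ← Equiv.finConsOfCompl_succ v τ, h]

lemma Equiv.setOf_succ_le_finConsOfCompl (v : V) (σ : Fin m ≃ ({v}ᶜ : Set V)) (k : Fin m) :
    {x : V | ∃ j, k.succ ≤ j ∧ Equiv.finConsOfCompl v σ j = x}
      = Subtype.val '' {y | ∃ j, k ≤ j ∧ σ j = y} := by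
  ext x
  constructor
  · rintro ⟨j, hj, rfl⟩
    induction j using Fin.cases with
    | zero => exact absurd (Fin.le_zero_iff.mp hj) (Fin.succ_ne_zero k)
    | succ j => exact ⟨σ j, ⟨j, Fin.succ_le_succ_iff.mp hj, rfl⟩, by simp⟩
  · rintro ⟨y, ⟨j, hj, rfl⟩, rfl⟩
    exact ⟨j.succ, Fin.succ_le_succ_iff.mpr hj, by simp⟩

end ConsEquiv

namespace IsConnectedEliminationOrdering

variable {V : Type*} {G : SimpleGraph V}

lemma of_fin_one (hG : G.Connected) (σ : Fin 1 ≃ V) : IsConnectedEliminationOrdering G σ := by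
  intro i
  rw [Subsingleton.elim i 0, Equiv.setOf_zero_le_eq_univ]
  exact (induceUnivIso G).connected_iff.mpr hG

variable [DecidableEq V] {m : ℕ}

lemma finConsOfCompl (hG : G.Connected) {v : V} {σ : Fin m ≃ ({v}ᶜ : Set V)}
    (hσ : IsConnectedEliminationOrdering (G.induce {v}ᶜ) σ) :
    IsConnectedEliminationOrdering G (Equiv.finConsOfCompl v σ) := by
  intro i
  induction i using Fin.cases with
  | zero =>
    rw [Equiv.setOf_zero_le_eq_univ]
    exact (induceUnivIso G).connected_iff.mpr hG
  | succ k =>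
    rw [Equiv.setOf_succ_le_finConsOfCompl]
    exact (induceInduceIso G _ _).connected_iff.mp (hσ k)

/-- Orderings that start with distinct vertices are distinct. -/
lemma card_add_card_le_card [Finite V] (hG : G.Connected) {u v : V} (huv : u ≠ v) :
    Nat.card {σ : Fin m ≃ ({u}ᶜ : Set V) // IsConnectedEliminationOrdering (G.induce {u}ᶜ) σ} +
      Nat.card {σ : Fin m ≃ ({v}ᶜ : Set V) // IsConnectedEliminationOrdering (G.induce {v}ᶜ) σ} ≤
      Nat.card {σ : Fin (m + 1) ≃ V // IsConnectedEliminationOrdering G σ} := by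
  rw [← Nat.card_sum]
  refine Nat.card_le_card_of_injective
    (Sum.elim (fun σ ↦ ⟨_, finConsOfCompl hG σ.2⟩) (fun σ ↦ ⟨_, finConsOfCompl hG σ.2⟩)) ?_
  refine Function.Injective.sumElim ?_ ?_ fun σ τ h ↦ huv ?_
  · exact fun σ τ h ↦ Subtype.val_injective <|
      Equiv.finConsOfCompl_injective u (congrArg Subtype.val h)
  · exact fun σ τ h ↦ Subtype.val_injective <|
      Equiv.finConsOfCompl_injective v (congrArg Subtype.val h)
  · simpa using congrArg (fun σ ↦ σ.1 0) h

end IsConnectedEliminationOrdering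

/-- Every finite connected simple graph on `n ≥ 1` vertices admits at least
`2^(n−1)` orderings of its vertices such that each suffix induces a connected
subgraph. -/
theorem connected_many_elimination_orderings {V : Type*} [Fintype V] {n : ℕ}
    (G : SimpleGraph V) (hG : G.Connected)
    (hn : Fintype.card V = n) (hn1 : 1 ≤ n) :
    2 ^ (n - 1) ≤
      Nat.card {σ : Fin n ≃ V // IsConnectedEliminationOrdering G σ} := by
  classical
  induction n, hn1 using Nat.le_induction generalizing V with
  | base =>
    let σ := (Fintype.equivFinOfCardEq hn).symm
    have : Nonempty {σ : Fin 1 ≃ V // IsConnectedEliminationOrdering G σ} :=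
      ⟨⟨σ, .of_fin_one hG σ⟩⟩
    exact Nat.card_pos
  | succ n hn1 ih =>
    have : Nontrivial V := Fintype.one_lt_card_iff_nontrivial.mp (by omega)
    obtain ⟨u, v, huv, hu, hv⟩ := hG.exists_ne_connected_induce_compl_singleton
    have card_compl (w : V) : Fintype.card ({w}ᶜ : Set V) = n := by
      rw [Fintype.card_compl_set, Set.card_singleton, hn, Nat.add_sub_cancel]
    calc 2 ^ (n + 1 - 1) = 2 ^ (n - 1) + 2 ^ (n - 1) :=
          (Nat.two_pow_pred_add_two_pow_pred hn1).symm
      _ ≤ _ := Nat.add_le_add (ih _ hu (card_compl u)) (ih _ hv (card_compl v))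
      _ ≤ _ := IsConnectedEliminationOrdering.card_add_card_le_card hG huv
end
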